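/- arXiv:2603.21000 — 2 statements merged into one kernel-verified Lean document; each statement's English description precedes it below -/
import Mathlib

section
/- Let p be a prime and A an abelian group such that there exists M with |A/nA| ≤ M for all positive integers n coprime to p. Then the p'-adic completion of A (the inverse limit of A/nA over n coprime to p) is a finite group. -/
/-- The additive homomorphism `a ↦ n • a` on an abelian group. -/
def nMul (A : Type*) [AddCommGroup A] (n : ℕ) : A →+ A :=
  AddMonoidHom.mk' (fun a => n • a) (fun a b => smul_add n a b)

/-- The subgroup of elements of finite order coprime to `p` ("p'-torsion"). -/
def pPrimeTorsion (A : Type*) [AddCommGroup A] (p : ℕ) : AddSubgroup A where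
  carrier := {a : A | ∃ n : ℕ, 0 < n ∧ Nat.Coprime n p ∧ n • a = 0}
  zero_mem' := ⟨1, Nat.one_pos, Nat.coprime_one_left p, smul_zero 1⟩
  add_mem' := by
    rintro a b ⟨n, hn, hcn, ha⟩ ⟨m, hm, hcm, hb⟩
    refine ⟨n * m, Nat.mul_pos hn hm, Nat.Coprime.mul hcn hcm, ?_⟩
    have h1 : (n * m) • a = 0 := by rw [mul_comm, mul_smul, ha, smul_zero]
    have h2 : (n * m) • b = 0 := by rw [mul_smul, hb, smul_zero]
    rw [smul_add, h1, h2, add_zero]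
  neg_mem' := by
    rintro a ⟨n, hn, hcn, ha⟩
    exact ⟨n, hn, hcn, by rw [smul_neg, ha, neg_zero]⟩

lemma nMul_range_le (A : Type*) [AddCommGroup A] {n m : ℕ} (h : n ∣ m) :
    (nMul A m).range ≤ (nMul A n).range := by
  rintro x ⟨b, rfl⟩
  obtain ⟨k, rfl⟩ := h
  exact ⟨k • b, by simp [nMul, mul_smul]⟩

/-- Transition map `A/mA → A/nA` for `n ∣ m`. -/
def transMap (A : Type*) [AddCommGroup A] {n m : ℕ} (h : n ∣ m) :
    (A ⧸ (nMul A m).range) →+ A ⧸ (nMul A n).range :=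
  QuotientAddGroup.map _ _ (AddMonoidHom.id A)
    (fun x hx => by simpa using nMul_range_le A h hx)

/-- Index set: positive integers coprime to `p`. -/
def Idx (p : ℕ) := {n : ℕ // 0 < n ∧ Nat.Coprime n p}

lemma transMap_surjective (A : Type*) [AddCommGroup A] {n m : ℕ} (h : n ∣ m) :
    Function.Surjective (transMap A h) := by
  intro x
  obtain ⟨a, rfl⟩ := QuotientAddGroup.mk_surjective x
  exact ⟨QuotientAddGroup.mk a, rfl⟩

/-- If `|A/nA| ≤ M` uniformly for all `n` coprime to `p`, then the p'-adic completion
of `A` (inverse limit of the `A/nA` over `n` coprime to `p`) is finite. -/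
theorem stmt2 (p : ℕ) (hp : p.Prime) (A : Type) [AddCommGroup A] (M : ℕ)
    (hbd : ∀ n : ℕ, 0 < n → Nat.Coprime n p →
      Finite (A ⧸ (nMul A n).range) ∧ Nat.card (A ⧸ (nMul A n).range) ≤ M) :
    Finite {f : ∀ n : Idx p, A ⧸ (nMul A n.1).range //
      ∀ (n m : Idx p) (h : n.1 ∣ m.1), transMap A h (f m) = f n} := by
  -- the cardinality function
  set c : Idx p → ℕ := fun n => Nat.card (A ⧸ (nMul A n.1).range) with hc
  -- pick an index with maximal cardinality
  have hbdd : BddAbove (Set.range c) := by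
    refine ⟨M, ?_⟩
    rintro _ ⟨n, rfl⟩
    exact (hbd n.1 n.2.1 n.2.2).2
  have hne : (Set.range c).Nonempty := ⟨c ⟨1, Nat.one_pos, Nat.coprime_one_left p⟩, ⟨_, rfl⟩⟩
  obtain ⟨n0, hn0⟩ : ∃ n0 : Idx p, sSup (Set.range c) = c n0 := by
    have := Nat.sSup_mem hne hbdd
    obtain ⟨n0, h⟩ := this
    exact ⟨n0, h.symm⟩
  have hmax : ∀ n : Idx p, c n ≤ c n0 := fun n => hn0 ▸ le_csSup hbdd ⟨n, rfl⟩
  have hfin : ∀ n : Idx p, Finite (A ⧸ (nMul A n.1).range) := fun n =>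
    (hbd n.1 n.2.1 n.2.2).1
  -- the evaluation-at-n0 map is injective on the limit
  have hinj : Function.Injective
      (fun f : {f : ∀ n : Idx p, A ⧸ (nMul A n.1).range //
        ∀ (n m : Idx p) (h : n.1 ∣ m.1), transMap A h (f m) = f n} => f.1 n0) := by
    rintro ⟨f, hf⟩ ⟨g, hg⟩ h0
    simp only at h0
    ext n
    show f n = g n
    -- common multiple
    have hmpos : 0 < Nat.lcm n.1 n0.1 := Nat.lcm_pos n.2.1 n0.2.1
    have hmcop : Nat.Coprime (Nat.lcm n.1 n0.1) p :=
      Nat.Coprime.coprime_dvd_left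
        (Nat.lcm_dvd (dvd_mul_right _ _) (dvd_mul_left _ _))
        (n.2.2.mul n0.2.2)
    set m : Idx p := ⟨Nat.lcm n.1 n0.1, hmpos, hmcop⟩ with hmdef
    have hdn : n.1 ∣ m.1 := Nat.dvd_lcm_left _ _
    have hd0 : n0.1 ∣ m.1 := Nat.dvd_lcm_right _ _
    -- the transition map A/mA → A/n0A is bijective (surjective, max card)
    have := hfin m
    have := hfin n0
    have hsurj := transMap_surjective A (n := n0.1) (m := m.1) hd0
    have hcard : Nat.card (A ⧸ (nMul A m.1).range)
        = Nat.card (A ⧸ (nMul A n0.1).range) :=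
      le_antisymm (hmax m) (Nat.card_le_card_of_surjective _ hsurj)
    have hbij : Function.Bijective (transMap A hd0) :=
      (Nat.bijective_iff_surjective_and_card _).mpr ⟨hsurj, hcard⟩
    have hfm : f m = g m := hbij.1 (by rw [hf n0 m hd0, hg n0 m hd0, h0])
    rw [← hf n m hdn, ← hg n m hdn, hfm]
  have := hfin n0
  exact Finite.of_injective _ hinj
end

section
/- Let p be a prime and A an abelian group. Suppose there exists an integer M such that |A/nA| ≤ M for every positive integer n coprime to p. Then A is isomorphic to F ⊕ D where F is a finite group of order coprime to p and D is p'-divisible (D/nD = 0 for all n coprime to p). -/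
/-!
Choose `n₀` coprime to `p` for which the index of `D = n₀ A` is maximal. For `n` coprime to `p`,
`n n₀ A ≤ n₀ A` and the index cannot grow, so `n D = n n₀ A = D`: `D` is p'-divisible.
As `A/D` is killed by `n₀` and `D` is divisible by every divisor of `n₀`, a subgroup `F` maximal with
`F ∩ D = 0` satisfies `F + D = A`. Then `F` embeds in the finite group `A/D` and is killed by
`n₀`, so by Cauchy's theorem its order is prime to `p`.
-/

open AddSubgroup

@[to_additive]
theorem Subgroup.eq_of_le_of_index_le {G : Type*} [Group G] {H K : Subgroup G} (hHK : H ≤ K)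
    (hH : H.index ≠ 0) (hKH : H.index ≤ K.index) : H = K := by
  have hK : K.index ≠ 0 := fun h =>
    hH (Nat.eq_zero_of_zero_dvd (h ▸ Subgroup.index_dvd_of_le hHK))
  have hmul := Subgroup.relIndex_mul_index hHK
  have hrel : H.relIndex K = 1 := by
    have h0 : H.relIndex K ≠ 0 := by rintro h; rw [h, zero_mul] at hmul; exact hH hmul.symm
    have h1 : H.relIndex K ≤ 1 :=
      Nat.le_of_mul_le_mul_right (by rwa [one_mul, hmul]) (Nat.pos_of_ne_zero hK)
    omega
  exact le_antisymm hHK (Subgroup.relIndex_eq_one.mp hrel)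

theorem Nat.exists_max_of_bounded {P : ℕ → Prop} {f : ℕ → ℕ} {M : ℕ} (hP : ∃ n, P n)
    (hf : ∀ n, P n → f n ≤ M) : ∃ n₀, P n₀ ∧ ∀ n, P n → f n ≤ f n₀ := by
  obtain ⟨_, ⟨n₀, hn₀, rfl⟩, hmax⟩ := BddAbove.exists_isGreatest_of_nonempty
    (S := f '' {n | P n}) ⟨M, by rintro _ ⟨n, hn, rfl⟩; exact hf n hn⟩
    (hP.elim fun n hn => ⟨f n, n, hn, rfl⟩)
  exact ⟨n₀, hn₀, fun n hn => hmax ⟨n, hn, rfl⟩⟩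

theorem Nat.Coprime.card_of_forall_nsmul_eq_zero {G : Type*} [AddGroup G] [Finite G] {n p : ℕ}
    (hp : p.Prime) (hnp : n.Coprime p) (hn : ∀ g : G, n • g = 0) : (Nat.card G).Coprime p := by
  have : Fact p.Prime := ⟨hp⟩
  refine Nat.coprime_comm.mp (hp.coprime_iff_not_dvd.mpr fun hpG => ?_)
  obtain ⟨g, hg⟩ := exists_prime_addOrderOf_dvd_card' p hpG
  exact hp.coprime_iff_not_dvd.mp (Nat.coprime_comm.mp hnp)
    (hg ▸ addOrderOf_dvd_of_nsmul_eq_zero (hn g))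

section

variable {A : Type*} [AddCommGroup A]

theorem AddSubgroup.exists_maximal_disjoint (D : AddSubgroup A) :
    ∃ F, Maximal (Disjoint · D) F := by
  have hchain (c : Set (AddSubgroup A)) (hc : c ⊆ {F | Disjoint F D})
      (hchain : IsChain (· ≤ ·) c) (hne : c.Nonempty) : Disjoint (sSup c) D := by
    refine disjoint_def.mpr fun {x} hx hxD => ?_
    obtain ⟨H, hH, hxH⟩ := (mem_sSup_of_directedOn hne hchain.directedOn).mp hx
    exact disjoint_def.mp (hc hH) hxH hxD
  obtain ⟨F, -, hF⟩ := zorn_le_nonempty₀ {F : AddSubgroup A | Disjoint F D}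
    (fun c hc hc' F hF => ⟨sSup c, hchain c hc hc' ⟨F, hF⟩, fun _ => le_sSup⟩)
    ⊥ disjoint_bot_left
  exact ⟨F, hF⟩

theorem AddSubgroup.exists_disjoint_sup_closure_singleton {F D : AddSubgroup A} {m : ℕ}
    (hFD : Disjoint F D) (hm : ∀ a : A, m • a ∈ D)
    (hdiv : ∀ k, k ∣ m → ∀ d ∈ D, ∃ e ∈ D, k • e = d) {a : A} (ha : a ∉ F ⊔ D) :
    ∃ b ∉ F, Disjoint (F ⊔ closure {b}) D := by
  -- `b = a - d'` with `k • d'` the `D`-component of `k • a` has `k • b ∈ F`, where `k` is the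
  -- order of `a` modulo `F ⊔ D`.
  set k := addOrderOf (a : A ⧸ F ⊔ D)
  have hkm : k ∣ m := addOrderOf_dvd_of_nsmul_eq_zero <| by
    rw [← QuotientAddGroup.mk_nsmul, QuotientAddGroup.eq_zero_iff]
    exact mem_sup_right (hm a)
  have hka : k • a ∈ F ⊔ D := by
    rw [← QuotientAddGroup.eq_zero_iff, QuotientAddGroup.mk_nsmul]
    exact addOrderOf_nsmul_eq_zero _
  obtain ⟨f, hf, d, hd, hfd⟩ := mem_sup.mp hka
  obtain ⟨d', hd', rfl⟩ := hdiv k hkm d hd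
  have hkb : k • (a - d') = f := by rw [smul_sub, ← hfd, add_sub_cancel_right]
  have hb : ((a - d' : A) : A ⧸ F ⊔ D) = a := by
    rw [QuotientAddGroup.eq_iff_sub_mem, sub_sub_cancel_left]
    exact neg_mem (mem_sup_right hd')
  refine ⟨a - d', fun hbF => ha ?_, disjoint_def.mpr fun {x} hx hxD => ?_⟩
  · rw [← QuotientAddGroup.eq_zero_iff, ← hb, QuotientAddGroup.eq_zero_iff]
    exact mem_sup_left hbF
  obtain ⟨f₁, hf₁, y, hy, rfl⟩ := mem_sup.mp hx
  obtain ⟨t, rfl⟩ := mem_closure_singleton.mp hy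
  have htb : t • (a - d') ∈ F ⊔ D := by
    rw [← add_sub_cancel_left f₁ (t • (a - d'))]
    exact sub_mem (mem_sup_right hxD) (mem_sup_left hf₁)
  obtain ⟨s, rfl⟩ : (k : ℤ) ∣ t := addOrderOf_dvd_iff_zsmul_eq_zero.mpr <| by
    rwa [← hb, ← QuotientAddGroup.mk_zsmul, QuotientAddGroup.eq_zero_iff]
  have htF : ((k : ℤ) * s) • (a - d') ∈ F := by
    rw [mul_comm, mul_zsmul, natCast_zsmul, hkb]
    exact zsmul_mem hf s
  exact disjoint_def.mp hFD (add_mem hf₁ htF) hxD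

theorem AddSubgroup.exists_isCompl_of_nsmul_mem (D : AddSubgroup A) {m : ℕ}
    (hm : ∀ a : A, m • a ∈ D)
    (hdiv : ∀ k, k ∣ m → ∀ d ∈ D, ∃ e ∈ D, k • e = d) : ∃ F, IsCompl F D := by
  obtain ⟨F, hF⟩ := D.exists_maximal_disjoint
  refine ⟨F, hF.prop, codisjoint_iff.mpr (eq_top_iff' _ |>.mpr fun a => ?_)⟩
  by_contra ha
  obtain ⟨b, hbF, hdisj⟩ := exists_disjoint_sup_closure_singleton hF.prop hm hdiv ha
  exact hbF (hF.2 hdisj le_sup_left (mem_sup_right (subset_closure rfl)))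

theorem AddSubgroup.injective_mk_of_disjoint {F D : AddSubgroup A} (h : Disjoint F D) :
    Function.Injective fun f : F => (f : A ⧸ D) := by
  intro f₁ f₂ hf
  rw [QuotientAddGroup.eq_iff_sub_mem] at hf
  exact Subtype.ext (sub_eq_zero.mp (disjoint_def.mp h (sub_mem f₁.2 f₂.2) hf))

theorem range_nMul_mul_le (m n : ℕ) : (nMul A (m * n)).range ≤ (nMul A n).range := by
  rintro _ ⟨a, rfl⟩
  exact ⟨m • a, (mul_comm m n ▸ mul_smul n m a).symm⟩

theorem exists_nsmul_eq_of_range_nMul_mul_eq {m n : ℕ}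
    (h : (nMul A (m * n)).range = (nMul A n).range) :
    ∀ d ∈ (nMul A n).range, ∃ e ∈ (nMul A n).range, m • e = d := by
  rintro _ hd
  obtain ⟨a, rfl⟩ := h ▸ hd
  exact ⟨n • a, ⟨a, rfl⟩, (mul_smul m n a).symm⟩

end

/-- If `|A/nA| ≤ M` uniformly for all positive `n` coprime to `p`, then `A` is an
(internal) direct sum `F ⊕ D` with `F` finite of order coprime to `p` and `D` p'-divisible. -/
theorem stmt3 (p : ℕ) (hp : p.Prime) (A : Type*) [AddCommGroup A] (M : ℕ)
    (hbd : ∀ n : ℕ, 0 < n → Nat.Coprime n p →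
      Finite (A ⧸ (nMul A n).range) ∧ Nat.card (A ⧸ (nMul A n).range) ≤ M) :
    ∃ F D : AddSubgroup A, IsCompl F D ∧ Finite F ∧ (Nat.card F).Coprime p ∧
      ∀ n : ℕ, 0 < n → Nat.Coprime n p → ∀ d ∈ D, ∃ e ∈ D, n • e = d := by
  obtain ⟨n₀, ⟨hn₀, hn₀p⟩, hmax⟩ := Nat.exists_max_of_bounded
    (P := fun n => 0 < n ∧ n.Coprime p) (f := fun n => (nMul A n).range.index)
    ⟨1, one_pos, Nat.coprime_one_left p⟩
    fun n ⟨hn, hnp⟩ => (index_eq_card (nMul A n).range).symm ▸ (hbd n hn hnp).2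
  set D := (nMul A n₀).range
  have hDdiv : ∀ n, 0 < n → n.Coprime p → ∀ d ∈ D, ∃ e ∈ D, n • e = d := by
    intro n hn hnp
    have hfin := (hbd _ (mul_pos hn hn₀) (hnp.mul_left hn₀p)).1
    exact exists_nsmul_eq_of_range_nMul_mul_eq <| eq_of_le_of_index_le (range_nMul_mul_le n n₀)
      index_ne_zero_of_finite (hmax _ ⟨mul_pos hn hn₀, hnp.mul_left hn₀p⟩)
  obtain ⟨F, hFD⟩ := D.exists_isCompl_of_nsmul_mem (m := n₀) (fun a => ⟨a, rfl⟩)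
    fun k hk => hDdiv k (Nat.pos_of_dvd_of_pos hk hn₀) (hn₀p.coprime_dvd_left hk)
  have : Finite (A ⧸ D) := (hbd n₀ hn₀ hn₀p).1
  have hFfin : Finite F := Finite.of_injective _ (injective_mk_of_disjoint hFD.disjoint)
  have hF : ∀ f : F, n₀ • f = 0 := fun f =>
    Subtype.ext (disjoint_def.mp hFD.disjoint (nsmul_mem f.2 n₀) ⟨f, rfl⟩)
  exact ⟨F, D, hFD, hFfin, hn₀p.card_of_forall_nsmul_eq_zero hp hF, hDdiv⟩
end
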